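/- Let N ≥ 2, 0 < η < π/4 and m ∈ {0,1,2,3}. Then there exist constants c, C > 0, depending only on N, η (and m), such that for every ξ' = (ξ_1, …, ξ_{N−1}) with each ξ_j ∈ Σ̃_η and every x_N > 0, |A^m e^{−A x_N}| ≤ Ã^m e^{−c Ã x_N} ≤ C Ã^{m−1} x_N^{−1}, where A := (ξ_1² + ⋯ + ξ_{N−1}²)^{1/2} and Ã := (|ξ_1|² + ⋯ + |ξ_{N−1}|²)^{1/2}. -/

import Mathlib

open Complex

noncomputable section

/-- The sector `Σ_ε = {λ ∈ ℂ \ {0} : |arg λ| < π − ε}`. -/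
def SSector (ε : ℝ) : Set ℂ := {z | z ≠ 0 ∧ |z.arg| < Real.pi - ε}

/-- The double sector `Σ̃_η = {z ∈ ℂ \ {0} : |arg z| < η or |arg z| > π − η}`. -/
def DSector (η : ℝ) : Set ℂ := {z | z ≠ 0 ∧ (|z.arg| < η ∨ Real.pi - η < |z.arg|)}

/-- `A = (ξ_1² + ⋯ + ξ_{N−1}²)^{1/2}` (principal square root). -/
def AA {n : ℕ} (ξ : Fin n → ℂ) : ℂ := (∑ j, ξ j ^ 2) ^ ((1 : ℂ) / 2)

/-- `B = (λ + A²)^{1/2}` (principal square root). -/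
def BB {n : ℕ} (lam : ℂ) (ξ : Fin n → ℂ) : ℂ := (lam + AA ξ ^ 2) ^ ((1 : ℂ) / 2)

/-- `Ã = (|ξ_1|² + ⋯ + |ξ_{N−1}|²)^{1/2}`. -/
def tA {n : ℕ} (ξ : Fin n → ℂ) : ℝ := Real.sqrt (∑ j, ‖ξ j‖ ^ 2)

/-- `M_λ(ξ', x_N) = (e^{−B x_N} − e^{−A x_N})/(B − A)`. -/
def Mfun {n : ℕ} (lam : ℂ) (ξ : Fin n → ℂ) (x : ℝ) : ℂ :=
  (Complex.exp (-BB lam ξ * (x : ℂ)) - Complex.exp (-AA ξ * (x : ℂ))) / (BB lam ξ - AA ξ)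

/- For `ξ_j` in the double sector, `Re ξ_j² ≥ cos 2η |ξ_j|²`, so `A² = ∑ ξ_j²` satisfies
`Re A² ≥ cos 2η Ã²` and `|A²| ≤ Ã²`. Since `Re √w = √((|w| + Re w)/2) ≥ √(Re w)`, this gives
`|A| ≤ Ã` and `Re A ≥ c Ã` with `c = √(cos 2η)`, hence the first inequality; the second is
`e^{-y} ≤ y⁻¹` for `y = c Ã x_N`. -/

theorem re_sq_eq_norm_sq_mul_cos_two_mul_arg (z : ℂ) :
    (z ^ 2).re = ‖z‖ ^ 2 * Real.cos (2 * z.arg) := by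
  rw [Real.cos_two_mul', sq, mul_re, ← norm_mul_cos_arg, ← norm_mul_sin_arg]
  ring

theorem cos_two_mul_le_cos_two_mul_arg_of_mem_DSector {η : ℝ} (hη : η ≤ Real.pi / 2) {z : ℂ}
    (hz : z ∈ DSector η) : Real.cos (2 * η) ≤ Real.cos (2 * z.arg) := by
  have harg := abs_arg_le_pi z
  have hcos_abs : Real.cos (2 * z.arg) = Real.cos (2 * |z.arg|) := by
    rw [← abs_two, ← abs_mul, Real.cos_abs, abs_two]
  rw [hcos_abs]
  rcases hz.2 with hlt | hgt
  · exact Real.cos_le_cos_of_nonneg_of_le_pi (by positivity) (by linarith) (by linarith)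
  · -- reflect `2|arg z|` across `π`: near the negative real axis `z²` is near the positive one
    have hreflect : Real.cos (2 * |z.arg|) = Real.cos (2 * Real.pi - 2 * |z.arg|) := by
      rw [Real.cos_sub, Real.cos_two_pi, Real.sin_two_pi]; ring
    rw [hreflect]
    exact Real.cos_le_cos_of_nonneg_of_le_pi (by linarith) (by linarith) (by linarith)

theorem cos_two_mul_mul_norm_sq_le_re_sq_of_mem_DSector {η : ℝ} (hη : η ≤ Real.pi / 2)
    {z : ℂ} (hz : z ∈ DSector η) : Real.cos (2 * η) * ‖z‖ ^ 2 ≤ (z ^ 2).re := by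
  rw [re_sq_eq_norm_sq_mul_cos_two_mul_arg, mul_comm]
  exact mul_le_mul_of_nonneg_left (cos_two_mul_le_cos_two_mul_arg_of_mem_DSector hη hz)
    (sq_nonneg _)

theorem sqrt_re_le_re_cpow_inv_two (w : ℂ) : √w.re ≤ (w ^ (2⁻¹ : ℂ)).re := by
  rw [cpow_inv_two_re]
  exact Real.sqrt_le_sqrt (by linarith [re_le_norm w])

section Symbols

variable {n : ℕ} (ξ : Fin n → ℂ)

theorem AA_sq : AA ξ ^ 2 = ∑ j, ξ j ^ 2 := by
  rw [AA, one_div, cpow_ofNat_inv_pow]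

theorem tA_sq : tA ξ ^ 2 = ∑ j, ‖ξ j‖ ^ 2 :=
  Real.sq_sqrt (Finset.sum_nonneg fun _ _ => sq_nonneg _)

theorem tA_nonneg : 0 ≤ tA ξ :=
  Real.sqrt_nonneg _

theorem tA_pos {ξ} {j : Fin n} (hj : ξ j ≠ 0) : 0 < tA ξ :=
  Real.sqrt_pos.2 <| Finset.sum_pos' (fun _ _ => sq_nonneg _)
    ⟨j, Finset.mem_univ j, pow_pos (norm_pos_iff.2 hj) 2⟩

theorem norm_AA_le_tA : ‖AA ξ‖ ≤ tA ξ := by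
  refine (pow_le_pow_iff_left₀ (norm_nonneg _) (tA_nonneg ξ) two_ne_zero).1 ?_
  rw [← norm_pow, AA_sq, tA_sq]
  exact (norm_sum_le _ _).trans_eq (by simp only [norm_pow])

theorem sqrt_cos_two_mul_mul_tA_le_re_AA {η : ℝ} (hη : η ≤ Real.pi / 2) {ξ : Fin n → ℂ}
    (hξ : ∀ j, ξ j ∈ DSector η) : √(Real.cos (2 * η)) * tA ξ ≤ (AA ξ).re := by
  have hre : Real.cos (2 * η) * tA ξ ^ 2 ≤ (∑ j, ξ j ^ 2).re := by
    rw [tA_sq, re_sum, Finset.mul_sum]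
    exact Finset.sum_le_sum fun j _ => cos_two_mul_mul_norm_sq_le_re_sq_of_mem_DSector hη (hξ j)
  calc √(Real.cos (2 * η)) * tA ξ = √(Real.cos (2 * η) * tA ξ ^ 2) := by
        rw [Real.sqrt_mul' _ (sq_nonneg _), Real.sqrt_sq (tA_nonneg ξ)]
    _ ≤ √(∑ j, ξ j ^ 2).re := Real.sqrt_le_sqrt hre
    _ ≤ (AA ξ).re := by
        rw [AA, one_div]
        exact sqrt_re_le_re_cpow_inv_two _

end Symbols

theorem norm_pow_mul_exp_neg_mul_le {a : ℂ} {t c x : ℝ} (ha : ‖a‖ ≤ t) (hre : c * t ≤ a.re)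
    (hx : 0 ≤ x) (m : ℕ) : ‖a ^ m * exp (-a * x)‖ ≤ t ^ m * Real.exp (-c * t * x) := by
  rw [norm_mul, norm_pow, norm_exp]
  have hexp : Real.exp (-a * x).re ≤ Real.exp (-c * t * x) := by
    rw [Real.exp_le_exp, neg_mul, neg_re, re_mul_ofReal, neg_mul, neg_mul]
    exact neg_le_neg (mul_le_mul_of_nonneg_right hre hx)
  exact mul_le_mul (pow_le_pow_left₀ (norm_nonneg _) ha m) hexp (Real.exp_pos _).le
    (pow_nonneg ((norm_nonneg _).trans ha) m)

theorem pow_mul_exp_neg_mul_le {t c x : ℝ} (hc : 0 < c) (ht : 0 < t) (hx : 0 < x) (m : ℕ) :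
    t ^ m * Real.exp (-c * t * x) ≤ c⁻¹ * t ^ ((m : ℝ) - 1) * x⁻¹ := by
  have hy : 0 < c * t * x := by positivity
  have hexp : Real.exp (-c * t * x) ≤ (c * t * x)⁻¹ := by
    rw [neg_mul, neg_mul, Real.exp_neg]
    exact inv_anti₀ hy (by linarith [Real.add_one_le_exp (c * t * x)])
  calc t ^ m * Real.exp (-c * t * x) ≤ t ^ m * (c * t * x)⁻¹ := by gcongr
    _ = c⁻¹ * t ^ ((m : ℝ) - 1) * x⁻¹ := by
        rw [Real.rpow_sub ht, Real.rpow_natCast, Real.rpow_one]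
        field_simp

theorem A_exp_decay_general
    (N : ℕ) (hN : 2 ≤ N) (η : ℝ) (hη : 0 < η) (hη' : η < Real.pi / 4)
    (m : ℕ) :
    ∃ c C : ℝ, 0 < c ∧ 0 < C ∧
      ∀ ξ : Fin (N - 1) → ℂ, (∀ j, ξ j ∈ DSector η) → ∀ x : ℝ, 0 < x →
        ‖AA ξ ^ m * Complex.exp (-AA ξ * (x : ℂ))‖
          ≤ tA ξ ^ m * Real.exp (-c * tA ξ * x) ∧
        tA ξ ^ m * Real.exp (-c * tA ξ * x) ≤ C * tA ξ ^ ((m : ℝ) - 1) * x⁻¹ := by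
  have hcos : 0 < Real.cos (2 * η) := Real.cos_pos_of_mem_Ioo ⟨by linarith, by linarith⟩
  have hc : 0 < √(Real.cos (2 * η)) := Real.sqrt_pos.2 hcos
  refine ⟨√(Real.cos (2 * η)), (√(Real.cos (2 * η)))⁻¹, hc, inv_pos.2 hc, fun ξ hξ x hx => ?_⟩
  have ht : 0 < tA ξ := tA_pos (j := ⟨0, by omega⟩) (hξ _).1
  exact ⟨norm_pow_mul_exp_neg_mul_le (norm_AA_le_tA ξ)
      (sqrt_cos_two_mul_mul_tA_le_re_AA (by linarith) hξ) hx.le m,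
    pow_mul_exp_neg_mul_le hc ht hx m⟩

/-- Lemma (d): `|A^m e^{−A x_N}| ≤ Ã^m e^{−c Ã x_N} ≤ C Ã^{m−1} x_N^{−1}`. -/
theorem A_exp_decay
    (N : ℕ) (hN : 2 ≤ N) (η : ℝ) (hη : 0 < η) (hη' : η < Real.pi / 4)
    (m : ℕ) (hm : m ≤ 3) :
    ∃ c C : ℝ, 0 < c ∧ 0 < C ∧
      ∀ ξ : Fin (N - 1) → ℂ, (∀ j, ξ j ∈ DSector η) → ∀ x : ℝ, 0 < x →
        ‖AA ξ ^ m * Complex.exp (-AA ξ * (x : ℂ))‖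
          ≤ tA ξ ^ m * Real.exp (-c * tA ξ * x) ∧
        tA ξ ^ m * Real.exp (-c * tA ξ * x) ≤ C * tA ξ ^ ((m : ℝ) - 1) * x⁻¹ :=
  A_exp_decay_general N hN η hη hη' m

end
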